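/- Let n, B, K be natural numbers with B ≥ 2, and let F be a finite family of block assignments β : Fin (2n) → Fin K, each of whose fibers has at most B elements. Suppose that for every bijection σ : Fin n ≃ Fin n there exists some β ∈ F with β(i) = β(n + σ(i)) for all i ∈ Fin n. Then, as real numbers, |F| ≥ (2n/(e·B))^n. -/

import Mathlib

/-!
If `β` solves some permutation `σ₀`, then inside every block the atoms of the second half
are at least as many as those of the first half (`σ₀⁻¹` injects the former into the latter),
so a block of size at most `B` contains at most `B / 2` partners of any first-half atom.
Hence a permutation solved by `β` has at most `B / 2` choices for each `σ i`, and `β` solves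
at most `(B / 2) ^ n` of the `n!` permutations. Covering all of them needs
`|F| ≥ n! / (B / 2) ^ n ≥ (2n / (e B)) ^ n`, using `n! ≥ (n / e) ^ n`.
-/

open Finset Function Real
open scoped Nat

section ProximateNeighbors

variable {ι α κ : Type*} [Fintype ι] [Fintype α] [DecidableEq κ]

def solvedPerms [DecidableEq ι] (l r : ι → α) (β : α → κ) : Finset (Equiv.Perm ι) :=
  univ.filter fun σ => ∀ i, β (l i) = β (r (σ i))

variable {l r : ι → α} {β : α → κ} {B : ℕ}

lemma two_mul_card_partners_le (hl : Injective l) (hr : Injective r) (hlr : ∀ i j, l i ≠ r j)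
    (hβ : ∀ k, #(univ.filter fun x => β x = k) ≤ B) {σ₀ : Equiv.Perm ι}
    (hσ₀ : ∀ i, β (l i) = β (r (σ₀ i))) (i : ι) :
    2 * #(univ.filter fun j => β (r j) = β (l i)) ≤ B := by
  set A := univ.filter fun i' => β (l i') = β (l i)
  set D := univ.filter fun j => β (r j) = β (l i)
  have hDA : #D ≤ #A := by
    refine card_le_card_of_injOn σ₀.symm (fun j hj => ?_) σ₀.symm.injective.injOn
    simp only [D, A, coe_filter, mem_univ, true_and, Set.mem_ofPred_eq] at hj ⊢
    rw [hσ₀, Equiv.apply_symm_apply, hj]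
  have hdisj : Disjoint (A.map ⟨l, hl⟩) (D.map ⟨r, hr⟩) := by
    simp only [disjoint_left, mem_map, Embedding.coeFn_mk, not_exists, not_and]
    rintro _ ⟨i', -, rfl⟩ j - hj
    exact hlr i' j hj.symm
  have hsub : (A.map ⟨l, hl⟩).disjUnion (D.map ⟨r, hr⟩) hdisj ⊆
      univ.filter fun x => β x = β (l i) := by
    intro x hx
    simp only [mem_disjUnion, mem_map, Embedding.coeFn_mk, A, D, mem_filter, mem_univ,
      true_and] at hx ⊢
    obtain ⟨_, h, rfl⟩ | ⟨_, h, rfl⟩ := hx <;> exact h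
  calc 2 * #D ≤ #A + #D := by omega
    _ = #((A.map ⟨l, hl⟩).disjUnion (D.map ⟨r, hr⟩) hdisj) := by
      rw [card_disjUnion, card_map, card_map]
    _ ≤ B := (card_le_card hsub).trans (hβ _)

lemma two_pow_mul_card_solvedPerms_le [DecidableEq ι] (hl : Injective l) (hr : Injective r)
    (hlr : ∀ i j, l i ≠ r j) (hβ : ∀ k, #(univ.filter fun x => β x = k) ≤ B) :
    2 ^ Fintype.card ι * #(solvedPerms l r β) ≤ B ^ Fintype.card ι := by
  obtain hS | ⟨σ₀, hσ₀⟩ := (solvedPerms l r β).eq_empty_or_nonempty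
  · simp [hS]
  have hσ₀ : ∀ i, β (l i) = β (r (σ₀ i)) := (mem_filter.mp hσ₀).2
  set D : ι → Finset ι := fun i => univ.filter fun j => β (r j) = β (l i)
  have hsub : #(solvedPerms l r β) ≤ ∏ i, #(D i) := by
    rw [← Fintype.card_piFinset]
    refine card_le_card_of_injOn (⇑) (fun σ hσ => ?_) DFunLike.coe_injective.injOn
    simp only [solvedPerms, coe_filter, mem_univ, true_and, Set.mem_ofPred_eq] at hσ
    simpa [D] using fun i => (hσ i).symm
  calc 2 ^ Fintype.card ι * #(solvedPerms l r β) ≤ 2 ^ Fintype.card ι * ∏ i, #(D i) := by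
        gcongr
    _ = ∏ i, 2 * #(D i) := by rw [prod_mul_distrib, prod_const, card_univ]
    _ ≤ ∏ _i : ι, B := prod_le_prod' fun i _ => two_mul_card_partners_le hl hr hlr hβ hσ₀ i
    _ = B ^ Fintype.card ι := by rw [prod_const, card_univ]

lemma factorial_mul_two_pow_le_card_mul_pow [DecidableEq ι] (hl : Injective l) (hr : Injective r)
    (hlr : ∀ i j, l i ≠ r j) {F : Finset (α → κ)}
    (hF : ∀ β ∈ F, ∀ k, #(univ.filter fun x => β x = k) ≤ B)
    (hcov : ∀ σ : Equiv.Perm ι, ∃ β ∈ F, ∀ i, β (l i) = β (r (σ i))) :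
    (Fintype.card ι)! * 2 ^ Fintype.card ι ≤ #F * B ^ Fintype.card ι := by
  have hcover : (univ : Finset (Equiv.Perm ι)) ⊆ F.biUnion (solvedPerms l r) := by
    intro σ _
    obtain ⟨β, hβF, hβ⟩ := hcov σ
    exact mem_biUnion.mpr ⟨β, hβF, mem_filter.mpr ⟨mem_univ σ, hβ⟩⟩
  calc (Fintype.card ι)! * 2 ^ Fintype.card ι
        = 2 ^ Fintype.card ι * #(univ : Finset (Equiv.Perm ι)) := by
        rw [card_univ, Fintype.card_perm, mul_comm]
    _ ≤ 2 ^ Fintype.card ι * ∑ β ∈ F, #(solvedPerms l r β) := by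
      gcongr
      exact (card_le_card hcover).trans card_biUnion_le
    _ ≤ ∑ _β ∈ F, B ^ Fintype.card ι := by
      rw [mul_sum]
      exact sum_le_sum fun β hβ => two_pow_mul_card_solvedPerms_le hl hr hlr (hF β hβ)
    _ = #F * B ^ Fintype.card ι := by rw [sum_const, smul_eq_mul]

end ProximateNeighbors

lemma pow_div_exp_le_factorial (n : ℕ) : ((n : ℝ) / exp 1) ^ n ≤ n ! := by
  have h := pow_div_factorial_le_exp (n : ℝ) (Nat.cast_nonneg n) n
  rw [div_le_iff₀ (by positivity)] at h
  rw [div_pow, ← exp_nat_mul, mul_one, div_le_iff₀ (by positivity), mul_comm]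
  exact h

lemma pow_le_of_factorial_mul_two_pow_le {n B f : ℕ} (h : n ! * 2 ^ n ≤ f * B ^ n) :
    ((2 * n : ℝ) / (exp 1 * B)) ^ n ≤ f := by
  have h' : (n ! * 2 ^ n : ℝ) ≤ f * B ^ n := by exact_mod_cast h
  calc ((2 * n : ℝ) / (exp 1 * B)) ^ n = (n / exp 1) ^ n * 2 ^ n / B ^ n := by
        rw [← mul_pow, ← div_pow]
        ring
    _ ≤ n ! * 2 ^ n / B ^ n := by gcongr; exact pow_div_exp_le_factorial n
    _ ≤ f := div_le_of_le_mul₀ (by positivity) (by positivity) h'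

/-- If a finite family `F` of block assignments `β : Fin (2n) → Fin K`, each with
fibers of size at most `B` (where `B ≥ 2`), solves every proximate-neighbors
instance `σ : Fin n ≃ Fin n`, then, as real numbers, `|F| ≥ (2n/(e·B))^n`. -/
theorem stmt3 (n B K : ℕ) (F : Finset (Fin (2 * n) → Fin K))
    (hfib : ∀ β ∈ F, ∀ k : Fin K, (Finset.univ.filter fun x => β x = k).card ≤ B)
    (hcov : ∀ σ : Equiv.Perm (Fin n), ∃ β ∈ F, ∀ i : Fin n,
      β ⟨i.val, by omega⟩ = β ⟨n + (σ i).val, by omega⟩) :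
    (F.card : ℝ) ≥ ((2 * n : ℝ) / (Real.exp 1 * (B : ℝ))) ^ n := by
  have hl : Injective fun i : Fin n => (⟨i.val, by omega⟩ : Fin (2 * n)) :=
    fun i j h => by simpa [Fin.ext_iff] using h
  have hr : Injective fun j : Fin n => (⟨n + j.val, by omega⟩ : Fin (2 * n)) :=
    fun i j h => by simpa [Fin.ext_iff] using h
  have hlr : ∀ i j : Fin n, (⟨i.val, by omega⟩ : Fin (2 * n)) ≠ ⟨n + j.val, by omega⟩ :=
    fun i j h => by simp only [Fin.ext_iff] at h; omega
  have hcount := factorial_mul_two_pow_le_card_mul_pow hl hr hlr hfib hcov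
  rw [Fintype.card_fin] at hcount
  exact pow_le_of_factorial_mul_two_pow_le hcount
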